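/- arXiv:2312.12983 — 4 statements merged into one kernel-verified Lean document; each statement's English description precedes it below -/
import Mathlib

section
/- Let ω ∈ (π, 2π), λ = π/(2ω). The function ψ⁻(x) = |x|^{−λ−1/2} defined on the sector S_ω = {(r cos θ, r sin θ) : 0 < r < 1, 0 < θ < ω} is square-integrable on S_ω, i.e. ∫_{S_ω} |x|^{−2λ−1} dx = ω/(1−2λ) < ∞, but ψ⁻ does not belong to H^{1/2}(S_ω) (its H^{1/2} Gagliardo seminorm on S_ω is infinite). -/
open Real MeasureTheory Set
open scoped ENNReal

noncomputable section


abbrev E2 := EuclideanSpace ℝ (Fin 2)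

/-- The open circular sector of radius 1 and opening angle ω. -/
def sector (ω : ℝ) : Set E2 :=
  {x | ∃ r θ : ℝ, 0 < r ∧ r < 1 ∧ 0 < θ ∧ θ < ω ∧
    x 0 = r * Real.cos θ ∧ x 1 = r * Real.sin θ}

def sectorP (ω : ℝ) : Set (ℝ × ℝ) :=
  {p | ∃ r θ : ℝ, 0 < r ∧ r < 1 ∧ 0 < θ ∧ θ < ω ∧
    p.1 = r * Real.cos θ ∧ p.2 = r * Real.sin θ}

def F2 : E2 ≃ᵐ ℝ × ℝ :=
  (MeasurableEquiv.toLp 2 (Fin 2 → ℝ)).symm.trans (MeasurableEquiv.finTwoArrow)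

theorem F2_apply (x : E2) : F2 x = (x 0, x 1) := rfl

theorem hF2 : MeasurePreserving (F2 : E2 ≃ᵐ ℝ × ℝ) :=
  (volume_preserving_finTwoArrow ℝ).comp (EuclideanSpace.volume_preserving_symm_measurableEquiv_toLp (Fin 2))

theorem norm_E2 (x : E2) : ‖x‖ = √((x 0)^2 + (x 1)^2) := by
  rw [EuclideanSpace.norm_eq]
  simp [Fin.sum_univ_two, sq_abs]

theorem sector_preimage (ω : ℝ) : sector ω = F2 ⁻¹' (sectorP ω) := rfl

theorem my_lintegral_polar (f : ℝ × ℝ → ℝ≥0∞) :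
    (∫⁻ p in polarCoord.target, ENNReal.ofReal p.1 * f (polarCoord.symm p)) = ∫⁻ p, f p := by
  set B : ℝ × ℝ → ℝ × ℝ →L[ℝ] ℝ × ℝ := fun p =>
    LinearMap.toContinuousLinearMap (Matrix.toLin (Module.Basis.finTwoProd ℝ) (Module.Basis.finTwoProd ℝ)
      !![Real.cos p.2, -p.1 * Real.sin p.2; Real.sin p.2, p.1 * Real.cos p.2])
  have A : ∀ p ∈ polarCoord.target, HasFDerivWithinAt polarCoord.symm (B p) polarCoord.target p :=
    fun p _ => (hasFDerivAt_polarCoord_symm p).hasFDerivWithinAt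
  have B_det : ∀ p : ℝ × ℝ, (B p).det = p.1 := by
    intro p
    conv_rhs => rw [← one_mul p.1, ← cos_sq_add_sin_sq p.2]
    simp only [B, neg_mul, LinearMap.det_toContinuousLinearMap, LinearMap.det_toLin,
      Matrix.det_fin_two_of, sub_neg_eq_add]
    ring
  symm
  calc
    ∫⁻ p, f p = ∫⁻ p in polarCoord.source, f p := by
      rw [← setLIntegral_univ]
      exact (setLIntegral_congr polarCoord_source_ae_eq_univ).symm
    _ = ∫⁻ p in polarCoord.symm '' polarCoord.target, f p := by
      rw [polarCoord.symm_image_target_eq_source]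
    _ = ∫⁻ p in polarCoord.target, ENNReal.ofReal |(B p).det| * f (polarCoord.symm p) := by
      exact lintegral_image_eq_lintegral_abs_det_fderiv_mul volume
        polarCoord.open_target.measurableSet A polarCoord.symm.injOn f
    _ = ∫⁻ p in polarCoord.target, ENNReal.ofReal p.1 * f (polarCoord.symm p) := by
      refine setLIntegral_congr_fun polarCoord.open_target.measurableSet
        (fun p hp => ?_)
      rw [B_det, abs_of_pos hp.1]

def Tset (ω : ℝ) : Set (ℝ × ℝ) := Ioo (0:ℝ) 1 ×ˢ (Ioo 0 π ∪ Ioo (-π) (ω - 2*π))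

theorem Tset_subset_target {ω : ℝ} (hω : ω ∈ Set.Ioo π (2*π)) :
    Tset ω ⊆ polarCoord.target := by
  have hπ := Real.pi_pos
  rintro ⟨r, θ⟩ ⟨hr, hθ⟩
  refine ⟨hr.1, ?_⟩
  rcases hθ with h | h
  · exact ⟨by linarith [h.1], h.2⟩
  · exact ⟨h.1, by linarith [h.2, hω.2]⟩

theorem Tset_isOpen (ω : ℝ) : IsOpen (Tset ω) :=
  isOpen_Ioo.prod (isOpen_Ioo.union isOpen_Ioo)

theorem image_subset_sectorP {ω : ℝ} (hω : ω ∈ Set.Ioo π (2*π)) :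
    polarCoord.symm '' Tset ω ⊆ sectorP ω := by
  have hπ := Real.pi_pos
  rintro _ ⟨⟨r, θ⟩, ⟨hr, hθ⟩, rfl⟩
  rcases hθ with h | h
  · exact ⟨r, θ, hr.1, hr.2, h.1, lt_trans h.2 hω.1, by simp [polarCoord_symm_apply],
      by simp [polarCoord_symm_apply]⟩
  · refine ⟨r, θ + 2*π, hr.1, hr.2, by linarith [h.1], by linarith [h.2], ?_, ?_⟩
    · simp [polarCoord_symm_apply, Real.cos_add_two_pi]
    · simp [polarCoord_symm_apply, Real.sin_add_two_pi]

theorem sectorP_subset {ω : ℝ} (hω : ω ∈ Set.Ioo π (2*π)) :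
    sectorP ω ⊆ polarCoord.symm '' Tset ω ∪ {p : ℝ × ℝ | p.2 = 0} := by
  have hπ := Real.pi_pos
  rintro ⟨x, y⟩ ⟨r, θ, hr0, hr1, hθ0, hθω, h1, h2⟩
  rcases lt_trichotomy θ π with hθπ | hθπ | hθπ
  · left
    exact ⟨(r, θ), ⟨⟨hr0, hr1⟩, Or.inl ⟨hθ0, hθπ⟩⟩,
      by simp only [polarCoord_symm_apply]; exact Prod.ext h1.symm h2.symm⟩
  · right
    show y = 0
    rw [show y = r * Real.sin θ from h2, hθπ, Real.sin_pi, mul_zero]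
  · left
    have hmem : (θ - 2*π) ∈ Ioo (-π) (ω - 2*π) := ⟨by linarith, by linarith⟩
    refine ⟨(r, θ - 2*π), ⟨⟨hr0, hr1⟩, Or.inr hmem⟩, ?_⟩
    simp only [polarCoord_symm_apply, Real.cos_sub_two_pi, Real.sin_sub_two_pi]
    exact Prod.ext h1.symm h2.symm

theorem sectorP_aeeq {ω : ℝ} (hω : ω ∈ Set.Ioo π (2*π)) :
    sectorP ω =ᵐ[volume] polarCoord.symm '' Tset ω := by
  have hnull : volume {p : ℝ × ℝ | p.2 = 0} = 0 := by
    have : {p : ℝ × ℝ | p.2 = 0} = (univ : Set ℝ) ×ˢ ({0} : Set ℝ) := by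
      ext ⟨a, b⟩; simp [Set.mem_prod, eq_comm]
    rw [this, Measure.volume_eq_prod, Measure.prod_prod]
    simp
  rw [ae_eq_set]
  constructor
  · refine measure_mono_null (fun p hp => ?_) hnull
    rcases sectorP_subset hω hp.1 with h | h
    · exact absurd h hp.2
    · exact h
  · rw [Set.diff_eq_empty.mpr (image_subset_sectorP hω)]
    exact measure_empty

theorem vol_Aset {ω : ℝ} (hω : ω ∈ Set.Ioo π (2*π)) :
    volume (Ioo (0:ℝ) π ∪ Ioo (-π) (ω - 2*π)) = ENNReal.ofReal ω := by
  have hπ := Real.pi_pos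
  have hd : Disjoint (Ioo (0:ℝ) π) (Ioo (-π) (ω - 2*π)) := by
    refine Set.disjoint_left.mpr fun x hx hx' => ?_
    have := hx.1; have := hx'.2
    have : ω - 2*π < 0 := by linarith [hω.2]
    linarith [hx.1, hx'.2]
  rw [measure_union hd measurableSet_Ioo, Real.volume_Ioo, Real.volume_Ioo,
    ← ENNReal.ofReal_add (by linarith) (by linarith [hω.1])]
  ring_nf

theorem sector_lintegral_eq {ω : ℝ} (hω : ω ∈ Set.Ioo π (2*π)) :
    ∫⁻ x in sector ω, ENNReal.ofReal (‖x‖ ^ (-(2 * (π / (2 * ω))) - 1)) =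
      ENNReal.ofReal (ω / (1 - 2 * (π / (2 * ω)))) := by
  have hπ := Real.pi_pos
  have hω0 : 0 < ω := lt_trans hπ hω.1
  set q : ℝ := -(2 * (π / (2 * ω))) - 1 with hq_def
  have hq1 : q + 1 = -(2 * (π / (2 * ω))) := by ring
  have hlam0 : 0 < π / (2 * ω) := by positivity
  have hlam1 : 2 * (π / (2 * ω)) < 1 := by
    rw [show 2 * (π / (2*ω)) = π / ω by ring, div_lt_one hω0]
    exact hω.1
  have hq1neg : q + 1 < 0 := by rw [hq1]; linarith
  have hq1gt : (-1:ℝ) < q + 1 := by rw [hq1]; linarith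
  -- the function on ℝ (globally measurable version)
  set h : ℝ → ℝ≥0∞ := fun r => ENNReal.ofReal (Real.exp (Real.log r * (q+1))) with hh_def
  have hmeas : Measurable h := (Real.measurable_log.mul_const _).exp.ennreal_ofReal
  set g : ℝ × ℝ → ℝ≥0∞ := fun p => ENNReal.ofReal (√(p.1^2 + p.2^2) ^ q) with hg_def
  have himg_meas : MeasurableSet (polarCoord.symm '' Tset ω) := by
    refine (polarCoord.symm.isOpen_image_of_subset_source (Tset_isOpen ω) ?_).measurableSet
    rw [OpenPartialHomeomorph.symm_source]
    exact Tset_subset_target hω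
  calc
    ∫⁻ x in sector ω, ENNReal.ofReal (‖x‖ ^ q)
        = ∫⁻ p in sectorP ω, g p := by
      rw [sector_preimage ω,
        ← hF2.setLIntegral_comp_preimage_emb F2.measurableEmbedding g (sectorP ω)]
      refine lintegral_congr fun x => ?_
      rw [norm_E2]
      rfl
    _ = ∫⁻ p in polarCoord.symm '' Tset ω, g p := setLIntegral_congr (sectorP_aeeq hω)
    _ = ∫⁻ p, (polarCoord.symm '' Tset ω).indicator g p := by
      rw [lintegral_indicator himg_meas]
    _ = ∫⁻ p in polarCoord.target,
          ENNReal.ofReal p.1 * (polarCoord.symm '' Tset ω).indicator g (polarCoord.symm p) :=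
      (my_lintegral_polar _).symm
    _ = ∫⁻ p in polarCoord.target, (Tset ω).indicator (fun p => h p.1) p := by
      refine setLIntegral_congr_fun polarCoord.open_target.measurableSet
        (fun p hp => ?_)
      by_cases hpT : p ∈ Tset ω
      · rw [Set.indicator_of_mem hpT, Set.indicator_of_mem (Set.mem_image_of_mem _ hpT)]
        have hp1 : 0 < p.1 := hpT.1.1
        have hval : ((p.1 * Real.cos p.2)^2 + (p.1 * Real.sin p.2)^2) = p.1^2 := by
          linear_combination p.1^2 * (Real.sin_sq_add_cos_sq p.2)
        have hgs : g (polarCoord.symm p) = ENNReal.ofReal (p.1 ^ q) := by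
          rw [hg_def]
          simp only [polarCoord_symm_apply]
          rw [hval, Real.sqrt_sq hp1.le]
        rw [hgs, ← ENNReal.ofReal_mul hp1.le]
        congr 1
        rw [← Real.rpow_def_of_pos hp1, Real.rpow_add hp1, Real.rpow_one]
        ring
      · rw [Set.indicator_of_notMem hpT, Set.indicator_of_notMem, mul_zero]
        intro hmem
        exact hpT ((polarCoord.symm.injOn.mem_image_iff
          (by rw [OpenPartialHomeomorph.symm_source]; exact Tset_subset_target hω)
          (by rwa [OpenPartialHomeomorph.symm_source])).mp hmem)
    _ = ∫⁻ p in Tset ω, h p.1 := by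
      rw [lintegral_indicator ((Tset_isOpen ω).measurableSet),
        Measure.restrict_restrict ((Tset_isOpen ω).measurableSet),
        Set.inter_eq_self_of_subset_left (Tset_subset_target hω)]
    _ = volume (Ioo (0:ℝ) π ∪ Ioo (-π) (ω - 2*π)) * ∫⁻ r in Ioo (0:ℝ) 1, h r := by
      rw [show Tset ω = Ioo (0:ℝ) 1 ×ˢ (Ioo 0 π ∪ Ioo (-π) (ω - 2*π)) from rfl]
      rw [Measure.volume_eq_prod, ← Measure.prod_restrict,
        lintegral_prod (fun p => h p.1) ((hmeas.comp measurable_fst).aemeasurable)]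
      simp only [lintegral_const, Measure.restrict_apply MeasurableSet.univ,
        Set.univ_inter]
      rw [lintegral_mul_const' _ _ (by rw [vol_Aset hω]; exact ENNReal.ofReal_ne_top)]
      exact mul_comm _ _
    _ = ENNReal.ofReal ω * ENNReal.ofReal (1 / (1 - 2 * (π / (2 * ω)))) := by
      rw [vol_Aset hω]
      congr 1
      have hcong : ∫⁻ r in Ioo (0:ℝ) 1, h r =
          ∫⁻ r in Ioo (0:ℝ) 1, ENNReal.ofReal (r ^ (q+1)) := by
        refine setLIntegral_congr_fun measurableSet_Ioo
          (fun r hr => ?_)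
        simp only [hh_def]
        rw [← Real.rpow_def_of_pos hr.1]
      rw [hcong]
      have hint : IntegrableOn (fun r : ℝ => r ^ (q+1)) (Ioo 0 1) := by
        have := intervalIntegral.intervalIntegrable_rpow' (a := (0:ℝ)) (b := 1) hq1gt
        rwa [intervalIntegrable_iff_integrableOn_Ioo_of_le zero_le_one] at this
      rw [← ofReal_integral_eq_lintegral_ofReal hint]
      · congr 1
        rw [← integral_Ioc_eq_integral_Ioo, ← intervalIntegral.integral_of_le zero_le_one,
          integral_rpow (Or.inl hq1gt)]
        rw [Real.one_rpow, Real.zero_rpow (by linarith : q + 1 + 1 ≠ 0)]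
        rw [hq1]
        ring_nf
      · refine (ae_restrict_iff' measurableSet_Ioo).mpr
          (Filter.Eventually.of_forall fun r hr => Real.rpow_nonneg hr.1.le _)
    _ = ENNReal.ofReal (ω / (1 - 2 * (π / (2 * ω)))) := by
      rw [← ENNReal.ofReal_mul hω0.le, mul_one_div]












def sq2 (c : ℝ) : Set E2 := {x | x 0 ∈ Ioo c (2*c) ∧ x 1 ∈ Ioo c (2*c)}

theorem sq2_preimage (c : ℝ) : sq2 c = F2 ⁻¹' (Ioo c (2*c) ×ˢ Ioo c (2*c)) := rfl

theorem sq2_meas (c : ℝ) : MeasurableSet (sq2 c) := by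
  rw [sq2_preimage]
  exact F2.measurable (measurableSet_Ioo.prod measurableSet_Ioo)

theorem sq2_vol {c : ℝ} (hc : 0 ≤ c) : volume (sq2 c) = ENNReal.ofReal c * ENNReal.ofReal c := by
  rw [sq2_preimage,
    hF2.measure_preimage (measurableSet_Ioo.prod measurableSet_Ioo).nullMeasurableSet,
    Measure.volume_eq_prod, Measure.prod_prod, Real.volume_Ioo]
  rw [show 2*c - c = c by ring]

theorem sq2_norm_bounds {c : ℝ} (hc : 0 < c) {x : E2} (hx : x ∈ sq2 c) :
    c ≤ ‖x‖ ∧ ‖x‖ ≤ 3 * c := by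
  obtain ⟨h0, h1⟩ := hx
  rw [norm_E2]
  constructor
  · rw [show c = √(c^2) from (Real.sqrt_sq hc.le).symm]
    apply Real.sqrt_le_sqrt
    nlinarith [h0.1, h1.1]
  · rw [show 3*c = √((3*c)^2) from (Real.sqrt_sq (by linarith)).symm]
    apply Real.sqrt_le_sqrt
    nlinarith [h0.1, h0.2, h1.1, h1.2]

theorem sq2_subset_sector {ω c : ℝ} (hω : π < ω) (hc : 0 < c) (hc2 : c ≤ 1/4) :
    sq2 c ⊆ sector ω := by
  have hπ := Real.pi_pos
  intro x hx
  obtain ⟨h0, h1⟩ := hx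
  have hx0 : 0 < x 0 := lt_trans hc h0.1
  have hx1 : 0 < x 1 := lt_trans hc h1.1
  obtain ⟨hnl, hnu⟩ := sq2_norm_bounds hc ⟨h0, h1⟩
  have hr0 : 0 < ‖x‖ := lt_of_lt_of_le hc hnl
  have hr1 : ‖x‖ < 1 := lt_of_le_of_lt hnu (by linarith)
  set t := x 1 / x 0 with ht_def
  have ht0 : 0 < t := div_pos hx1 hx0
  have hs : √(1 + t^2) = ‖x‖ / x 0 := by
    have h1t : 1 + t^2 = ((x 0)^2 + (x 1)^2) / (x 0)^2 := by
      rw [ht_def]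
      field_simp
    rw [h1t, Real.sqrt_div (by positivity) _, Real.sqrt_sq hx0.le, norm_E2]
  refine ⟨‖x‖, Real.arctan t, hr0, hr1, by rw [← Real.arctan_zero]; exact Real.arctan_strictMono ht0,
    lt_trans (Real.arctan_lt_pi_div_two t) (by linarith), ?_, ?_⟩
  · rw [Real.cos_arctan, hs]
    field_simp
  · rw [Real.sin_arctan, hs, ht_def]
    field_simp
variable {ω : ℝ}


-- key real inequality: 4 * s^e ≤ (3*(s/64))^e
theorem key_rpow {ω : ℝ} (hω : ω ∈ Set.Ioo π (2*π)) {s : ℝ} (hs0 : 0 < s) :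
    4 * s ^ (-(π / (2 * ω)) - 1/2) ≤ (3*(s/64)) ^ (-(π / (2 * ω)) - 1/2) := by
  have hπ := Real.pi_pos
  have hω0 : 0 < ω := lt_trans hπ hω.1
  set e : ℝ := -(π / (2 * ω)) - 1/2 with he_def
  clear_value e
  have he_ub : e ≤ -(3/4) := by
    have h24 : 1/4 ≤ π/(2*ω) := by
      rw [le_div_iff₀ (by positivity)]
      nlinarith [hω.2]
    rw [he_def]; linarith
  have he_lb : (-1:ℝ) ≤ e := by
    have : π/(2*ω) ≤ 1/2 := by
      rw [div_le_iff₀ (by positivity)]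
      nlinarith [hω.1]
    rw [he_def]; linarith
  have ht0 : 0 < s/64 := by positivity
  -- 3^(-e) ≤ 3
  have hB3 : (3:ℝ)^(-e) ≤ 3 := by
    calc (3:ℝ)^(-e) ≤ (3:ℝ)^(1:ℝ) :=
          Real.rpow_le_rpow_of_exponent_le (by norm_num) (by linarith)
    _ = 3 := Real.rpow_one 3
  -- 16 ≤ 64^(-e)
  have hA16 : (16:ℝ) ≤ (64:ℝ)^(-e) := by
    have h1 : ((2:ℝ)^((4:ℕ):ℝ)) ≤ (2:ℝ)^(-(6*e)) :=
      Real.rpow_le_rpow_of_exponent_le one_le_two (by push_cast; linarith)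
    have h2 : (2:ℝ)^(-(6*e)) = (64:ℝ)^(-e) := by
      rw [show (-(6*e):ℝ) = ((6:ℕ):ℝ)*(-e) by push_cast; ring, Real.rpow_mul (by norm_num),
        Real.rpow_natCast]
      norm_num
    rw [← h2]
    rw [Real.rpow_natCast] at h1
    norm_num at h1
    exact h1
  have hA0 : (0:ℝ) < (64:ℝ)^(-e) := Real.rpow_pos_of_pos (by norm_num) _
  have hB0 : (0:ℝ) < (3:ℝ)^(-e) := Real.rpow_pos_of_pos (by norm_num) _
  -- 4 * 64^e ≤ 3^e
  have hkey : 4 * (64:ℝ)^e ≤ (3:ℝ)^e := by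
    have ha : (64:ℝ)^e = ((64:ℝ)^(-e))⁻¹ := by
      rw [← Real.rpow_neg (by norm_num), neg_neg]
    have hb : (3:ℝ)^e = ((3:ℝ)^(-e))⁻¹ := by
      rw [← Real.rpow_neg (by norm_num), neg_neg]
    rw [ha, hb, show (4:ℝ) * ((64:ℝ)^(-e))⁻¹ = 4 / (64:ℝ)^(-e) by ring,
      inv_eq_one_div, div_le_div_iff₀ hA0 hB0]
    nlinarith
  have hs' : s = 64 * (s/64) := by ring
  calc 4 * s ^ e = 4 * ((64:ℝ)^e * (s/64)^e) := by
        rw [← Real.mul_rpow (by norm_num) ht0.le, ← hs']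
  _ = (4 * (64:ℝ)^e) * (s/64)^e := by ring
  _ ≤ (3:ℝ)^e * (s/64)^e :=
      mul_le_mul_of_nonneg_right hkey (Real.rpow_nonneg ht0.le _)
  _ = (3*(s/64))^e := (Real.mul_rpow (by norm_num) ht0.le).symm


theorem pointwise_bound {ω : ℝ} (hω : ω ∈ Set.Ioo π (2*π)) {s : ℝ} (hs0 : 0 < s) (hs1 : s ≤ 1/4)
    {x y : E2} (hx : x ∈ sq2 s) (hy : y ∈ sq2 (s/64)) :
    ENNReal.ofReal (s ^ (-(9/2) : ℝ) / 8) ≤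
      ENNReal.ofReal (|(‖x‖ ^ (-(π / (2 * ω)) - 1/2) : ℝ) -
          ‖y‖ ^ (-(π / (2 * ω)) - 1/2)| ^ 2 / ‖x - y‖ ^ 3) := by
  have hπ := Real.pi_pos
  have hω0 : 0 < ω := lt_trans hπ hω.1
  set e : ℝ := -(π / (2 * ω)) - 1/2 with he_def
  clear_value e
  have he_ub : e ≤ -(3/4) := by
    have h24 : 1/4 ≤ π/(2*ω) := by
      rw [le_div_iff₀ (by positivity)]
      nlinarith [hω.2]
    rw [he_def]; linarith
  have he_lb : (-1:ℝ) ≤ e := by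
    have : π/(2*ω) ≤ 1/2 := by
      rw [div_le_iff₀ (by positivity)]
      nlinarith [hω.1]
    rw [he_def]; linarith
  have he_neg : e < 0 := by linarith
  have ht0 : 0 < s/64 := by positivity
  obtain ⟨hxl, hxu⟩ := sq2_norm_bounds hs0 hx
  obtain ⟨hyl, hyu⟩ := sq2_norm_bounds ht0 hy
  have hx_pos : 0 < ‖x‖ := lt_of_lt_of_le hs0 hxl
  have hy_pos : 0 < ‖y‖ := lt_of_lt_of_le ht0 hyl
  have hse_pos : 0 < s ^ e := Real.rpow_pos_of_pos hs0 _
  -- ‖x‖^e ≤ s^e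
  have hux : ‖x‖ ^ e ≤ s ^ e := Real.rpow_le_rpow_of_nonpos hs0 hxl he_neg.le
  -- (3*(s/64))^e ≤ ‖y‖^e
  have huy : (3*(s/64)) ^ e ≤ ‖y‖ ^ e :=
    Real.rpow_le_rpow_of_nonpos hy_pos hyu he_neg.le
  have hkey : 4 * s ^ e ≤ (3*(s/64)) ^ e := he_def ▸ key_rpow hω hs0
  have hdiff : 3 * s ^ e ≤ ‖y‖ ^ e - ‖x‖ ^ e := by linarith
  have habs : |‖x‖ ^ e - ‖y‖ ^ e| = ‖y‖ ^ e - ‖x‖ ^ e := by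
    rw [abs_of_nonpos (by linarith), neg_sub]
  -- numerator bound
  have hsq : (3 * s ^ e)^2 ≤ (‖y‖ ^ e - ‖x‖ ^ e)^2 :=
    pow_le_pow_left₀ (by positivity) hdiff 2
  have h2e : (3 * s ^ e)^2 = 9 * s ^ (2*e) := by
    have hss : (s ^ e)^(2:ℕ) = s ^ (2*e) := by
      rw [← Real.rpow_natCast (s ^ e) 2, ← Real.rpow_mul hs0.le]
      norm_num
      ring_nf
    rw [mul_pow, hss]
    norm_num
  have h32 : s ^ (-(3/2):ℝ) ≤ s ^ (2*e) :=
    Real.rpow_le_rpow_of_exponent_ge hs0 (by linarith) (by linarith)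
  have hnum : 9 * s ^ (-(3/2):ℝ) ≤ (‖y‖ ^ e - ‖x‖ ^ e)^2 := by
    calc 9 * s ^ (-(3/2):ℝ) ≤ 9 * s ^ (2*e) := by linarith
    _ = (3 * s ^ e)^2 := h2e.symm
    _ ≤ _ := hsq
  -- denominator bound
  have hxny : ‖x - y‖ ≤ 4 * s := by
    calc ‖x - y‖ ≤ ‖x‖ + ‖y‖ := norm_sub_le x y
    _ ≤ 3*s + 3*(s/64) := by linarith
    _ ≤ 4 * s := by linarith
  have hxy_ne : x ≠ y := by
    intro h
    have h1 : s < x 0 := hx.1.1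
    have h2 : y 0 < 2*(s/64) := hy.1.2
    rw [h] at h1
    linarith
  have hden_pos : 0 < ‖x - y‖ := by
    rw [norm_pos_iff]
    exact sub_ne_zero.mpr hxy_ne
  have hden3 : (0:ℝ) < ‖x - y‖^3 := pow_pos hden_pos 3
  have hden_le : ‖x - y‖^3 ≤ 64 * s^3 := by
    calc ‖x - y‖^3 ≤ (4*s)^3 := pow_le_pow_left₀ (norm_nonneg _) hxny 3
    _ = 64 * s^3 := by ring
  have hdiv : 9 * s ^ (-(3/2):ℝ) / (64 * s^3) ≤
      (‖y‖ ^ e - ‖x‖ ^ e)^2 / ‖x - y‖^3 :=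
    div_le_div₀ (by positivity) hnum hden3 hden_le
  have hsval : s ^ (-(3/2):ℝ) / s^(3:ℕ) = s ^ (-(9/2):ℝ) := by
    rw [← Real.rpow_natCast s 3, ← Real.rpow_sub hs0]
    norm_num
  have h0 : (0:ℝ) ≤ s ^ (-(9/2):ℝ) := Real.rpow_nonneg hs0.le _
  have hfinal : s ^ (-(9/2):ℝ) / 8 ≤ 9 * s ^ (-(3/2):ℝ) / (64 * s^3) := by
    have heq : 9 * s ^ (-(3/2):ℝ) / (64 * s^3) = (9/64) * s ^ (-(9/2):ℝ) := by
      rw [← hsval]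
      push_cast
      ring
    rw [heq]
    linarith
  apply ENNReal.ofReal_le_ofReal
  rw [habs]
  exact le_trans hfinal (le_trans hdiv (le_of_eq rfl))

def sig (k : ℕ) : ℝ := (2:ℝ)^(-(k:ℤ)-2)

theorem sig_pos (k : ℕ) : 0 < sig k := zpow_pos (by norm_num) _

theorem sig_le (k : ℕ) : sig k ≤ 1/4 := by
  have : (2:ℝ)^(-(k:ℤ)-2) ≤ (2:ℝ)^(-2:ℤ) :=
    zpow_le_zpow_right₀ (by norm_num) (by omega)
  have h2 : ((2:ℝ)^(-2:ℤ)) = 1/4 := by norm_num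
  exact le_of_le_of_eq this h2

theorem sig_anti {k l : ℕ} (h : k < l) : 2 * sig l ≤ sig k := by
  have : (2:ℝ)^(-(l:ℤ)-1) ≤ (2:ℝ)^(-(k:ℤ)-2) :=
    zpow_le_zpow_right₀ (by norm_num) (by omega)
  calc 2 * sig l = (2:ℝ)^(-(l:ℤ)-1) := by
        rw [sig, ← zpow_one_add₀ (by norm_num : (2:ℝ) ≠ 0)]
        ring_nf
  _ ≤ (2:ℝ)^(-(k:ℤ)-2) := this
  _ = sig k := rfl

def Uk (k : ℕ) : Set (E2 × E2) := sq2 (sig k) ×ˢ sq2 (sig k / 64)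

theorem Uk_meas (k : ℕ) : MeasurableSet (Uk k) := (sq2_meas _).prod (sq2_meas _)

theorem Uk_disj : Pairwise (Function.onFun Disjoint Uk) := by
  have key : ∀ {k l : ℕ}, k < l → Disjoint (Uk k) (Uk l) := by
    intro k l hkl
    refine Set.disjoint_left.mpr ?_
    rintro ⟨x, y⟩ hpk hpl
    have h1 : sig k < x 0 := hpk.1.1.1
    have h2 : x 0 < 2 * sig l := hpl.1.1.2
    linarith [sig_anti hkl]
  intro k l hne
  rcases hne.lt_or_gt with h | h
  · exact key h
  · exact (key h).symm

theorem Uk_subset {ω : ℝ} (hω : ω ∈ Set.Ioo π (2*π)) (k : ℕ) :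
    Uk k ⊆ (sector ω) ×ˢ (sector ω) := by
  apply Set.prod_mono
  · exact sq2_subset_sector hω.1 (sig_pos k) (sig_le k)
  · refine sq2_subset_sector hω.1 (div_pos (sig_pos k) (by norm_num)) ?_
    have h1 := sig_le k
    have h2 := sig_pos k
    linarith

theorem term_bound {ω : ℝ} (hω : ω ∈ Set.Ioo π (2*π)) (k : ℕ) :
    ENNReal.ofReal (1/32768) ≤
      ∫⁻ p in Uk k, ENNReal.ofReal
        (|(‖p.1‖ ^ (-(Real.pi / (2 * ω)) - 1/2) : ℝ) -
            ‖p.2‖ ^ (-(Real.pi / (2 * ω)) - 1/2)| ^ 2 / ‖p.1 - p.2‖ ^ 3) := by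
  have hs0 := sig_pos k
  have hs1 := sig_le k
  set s := sig k with hs_def
  have ht0 : (0:ℝ) < s/64 := by positivity
  have hvol : volume (Uk k) = ENNReal.ofReal (s*s*((s/64)*(s/64))) := by
    rw [Uk, Measure.volume_eq_prod, Measure.prod_prod, sq2_vol hs0.le, sq2_vol ht0.le,
      ← ENNReal.ofReal_mul hs0.le, ← ENNReal.ofReal_mul ht0.le,
      ← ENNReal.ofReal_mul (by positivity : (0:ℝ) ≤ s*s)]
  calc ENNReal.ofReal (1/32768)
      ≤ ENNReal.ofReal (s^(-(9/2):ℝ)/8) * volume (Uk k) := by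
        rw [hvol, ← ENNReal.ofReal_mul (by positivity)]
        apply ENNReal.ofReal_le_ofReal
        have h4 : s^(-(9/2):ℝ) * s^(4:ℕ) = s^(-(1/2):ℝ) := by
          rw [← Real.rpow_natCast s 4, ← Real.rpow_add hs0]
          norm_num
        have h1s : 1 ≤ s^(-(1/2):ℝ) :=
          Real.one_le_rpow_of_pos_of_le_one_of_nonpos hs0 (by linarith) (by norm_num)
        have heq : s^(-(9/2):ℝ)/8 * (s*s*((s/64)*(s/64))) = s^(-(1/2):ℝ)/32768 := by
          rw [← h4]
          push_cast
          ring
        rw [heq]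
        linarith
  _ = ∫⁻ _p in Uk k, ENNReal.ofReal (s^(-(9/2):ℝ)/8) := (setLIntegral_const _ _).symm
  _ ≤ _ := setLIntegral_mono' (Uk_meas k) fun p hp =>
        pointwise_bound hω hs0 hs1 hp.1 hp.2

theorem part3 {ω : ℝ} (hω : ω ∈ Set.Ioo π (2*π)) :
    (∫⁻ p in (sector ω) ×ˢ (sector ω),
        ENNReal.ofReal
          (|(‖p.1‖ ^ (-(Real.pi / (2 * ω)) - 1/2) : ℝ) -
              ‖p.2‖ ^ (-(Real.pi / (2 * ω)) - 1/2)| ^ 2 / ‖p.1 - p.2‖ ^ 3)) = ⊤ := by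
  refine top_unique ?_
  calc (⊤:ℝ≥0∞) = ∑' _k : ℕ, ENNReal.ofReal (1/32768) :=
        (ENNReal.tsum_const_eq_top_of_ne_zero
          ((ENNReal.ofReal_pos.mpr (by norm_num)).ne')).symm
  _ ≤ ∑' k : ℕ, ∫⁻ p in Uk k, ENNReal.ofReal
        (|(‖p.1‖ ^ (-(Real.pi / (2 * ω)) - 1/2) : ℝ) -
            ‖p.2‖ ^ (-(Real.pi / (2 * ω)) - 1/2)| ^ 2 / ‖p.1 - p.2‖ ^ 3) :=
      ENNReal.tsum_le_tsum fun k => term_bound hω k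
  _ = ∫⁻ p in ⋃ k, Uk k, ENNReal.ofReal
        (|(‖p.1‖ ^ (-(Real.pi / (2 * ω)) - 1/2) : ℝ) -
            ‖p.2‖ ^ (-(Real.pi / (2 * ω)) - 1/2)| ^ 2 / ‖p.1 - p.2‖ ^ 3) :=
      (lintegral_iUnion Uk_meas Uk_disj _).symm
  _ ≤ _ := lintegral_mono_set (Set.iUnion_subset (Uk_subset hω))

/-- For ω ∈ (π, 2π) and λ = π/(2ω), the function |x|^{−λ−1/2} is square-integrable on the
sector S_ω, with ∫_{S_ω} |x|^{−2λ−1} dx = ω/(1−2λ), but its H^{1/2} Gagliardo seminorm on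
S_ω is infinite. -/
theorem sector_singular_function_L2_not_H_half (ω : ℝ)
    (hω : ω ∈ Set.Ioo Real.pi (2 * Real.pi)) :
    IntegrableOn (fun x : E2 => ‖x‖ ^ (-(2 * (Real.pi / (2 * ω))) - 1)) (sector ω) ∧
    (∫ x in sector ω, ‖x‖ ^ (-(2 * (Real.pi / (2 * ω))) - 1)) =
      ω / (1 - 2 * (Real.pi / (2 * ω))) ∧
    (∫⁻ p in (sector ω) ×ˢ (sector ω),
        ENNReal.ofReal
          (|(‖p.1‖ ^ (-(Real.pi / (2 * ω)) - 1/2) : ℝ) -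
              ‖p.2‖ ^ (-(Real.pi / (2 * ω)) - 1/2)| ^ 2 / ‖p.1 - p.2‖ ^ 3)) = ⊤ := by
  have hπ := Real.pi_pos
  have hω0 : 0 < ω := lt_trans hπ hω.1
  have hlam1 : 2 * (π / (2 * ω)) < 1 := by
    rw [show 2 * (π / (2*ω)) = π / ω by ring, div_lt_one hω0]
    exact hω.1
  have hnn : ∀ x : E2, 0 ≤ ‖x‖ ^ (-(2 * (π / (2 * ω))) - 1) := fun x =>
    Real.rpow_nonneg (norm_nonneg x) _
  have hsing : volume ({(0:E2)} : Set E2) = 0 := by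
    have h0 : ({(0:E2)} : Set E2) = F2 ⁻¹' {((0:ℝ),(0:ℝ))} := by
      ext z
      simp only [Set.mem_singleton_iff, Set.mem_preimage, F2_apply, Prod.mk.injEq]
      constructor
      · rintro rfl; simp
      · rintro ⟨h0, h1⟩
        ext i
        fin_cases i <;> simpa
    rw [h0, hF2.measure_preimage (measurableSet_singleton _).nullMeasurableSet,
      ← Set.singleton_prod_singleton, Measure.volume_eq_prod, Measure.prod_prod,
      Real.volume_singleton, mul_zero]
  have haesm : AEStronglyMeasurable (fun x : E2 => ‖x‖ ^ (-(2 * (π / (2 * ω))) - 1))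
      (volume.restrict (sector ω)) := by
    have hg : Measurable (fun x : E2 =>
        Real.exp (Real.log ‖x‖ * (-(2 * (π / (2 * ω))) - 1))) :=
      ((Real.measurable_log.comp measurable_norm).mul_const _).exp
    refine (hg.aestronglyMeasurable.congr ?_).restrict
    refine ae_iff.mpr (measure_mono_null (fun z hz => ?_) hsing)
    simp only [Set.mem_setOf_eq] at hz
    simp only [Set.mem_singleton_iff]
    by_contra hz0
    apply hz
    have hzpos : 0 < ‖z‖ := norm_pos_iff.mpr hz0
    rw [Real.rpow_def_of_pos hzpos]
  have hfin : HasFiniteIntegral (fun x : E2 => ‖x‖ ^ (-(2 * (π / (2 * ω))) - 1))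
      (volume.restrict (sector ω)) := by
    rw [hasFiniteIntegral_iff_ofReal (Filter.Eventually.of_forall fun x => hnn x)]
    rw [show (∫⁻ a, ENNReal.ofReal (‖a‖ ^ (-(2 * (π / (2 * ω))) - 1))
        ∂(volume.restrict (sector ω))) =
      ∫⁻ a in sector ω, ENNReal.ofReal (‖a‖ ^ (-(2 * (π / (2 * ω))) - 1)) from rfl]
    rw [sector_lintegral_eq hω]
    exact ENNReal.ofReal_lt_top
  refine ⟨⟨haesm, hfin⟩, ?_, part3 hω⟩
  rw [integral_eq_lintegral_of_nonneg_ae (Filter.Eventually.of_forall fun x => hnn x) haesm,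
    sector_lintegral_eq hω, ENNReal.toReal_ofReal (div_nonneg hω0.le (by linarith))]

end
end

section
/- For m ≥ 0, the equation m sin(2√E) + √E cos(2√E) = 0 has a unique solution E₁(m) in the interval [π²/16, π²/4). -/
open Real

private lemma f_strictAnti (m : ℝ) (hm : 0 ≤ m) :
    StrictAntiOn (fun t : ℝ => m * Real.sin t + t / 2 * Real.cos t)
      (Set.Icc (Real.pi / 2) Real.pi) := by
  have hderiv : ∀ t : ℝ, HasDerivAt (fun t : ℝ => m * Real.sin t + t / 2 * Real.cos t)
      (m * Real.cos t + (1 / 2 * Real.cos t + t / 2 * (-Real.sin t))) t := by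
    intro t
    have h1 : HasDerivAt (fun t : ℝ => m * Real.sin t) (m * Real.cos t) t :=
      (Real.hasDerivAt_sin t).const_mul m
    have h2 : HasDerivAt (fun t : ℝ => t / 2 * Real.cos t)
        (1 / 2 * Real.cos t + t / 2 * (-Real.sin t)) t := by
      have := ((hasDerivAt_id' t).div_const 2).mul (Real.hasDerivAt_cos t)
      exact this
    exact h1.add h2
  apply strictAntiOn_of_deriv_neg (convex_Icc _ _)
  · exact Continuous.continuousOn (by continuity)
  · intro t ht
    rw [interior_Icc] at ht
    rw [(hderiv t).deriv]
    have hcos : Real.cos t < 0 :=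
      Real.cos_neg_of_pi_div_two_lt_of_lt ht.1 (by linarith [Real.pi_pos, ht.2])
    have hsin : 0 < Real.sin t :=
      Real.sin_pos_of_pos_of_lt_pi (lt_trans (by positivity) ht.1) ht.2
    have ht0 : 0 < t := lt_trans (by positivity) ht.1
    nlinarith

/-- For every m ≥ 0, the equation m sin(2√E) + √E cos(2√E) = 0 has a unique solution
in [π²/16, π²/4). -/
theorem unique_transverse_eigenvalue (m : ℝ) (hm : 0 ≤ m) :
    ∃! E : ℝ, E ∈ Set.Ico (Real.pi ^ 2 / 16) (Real.pi ^ 2 / 4) ∧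
      m * Real.sin (2 * Real.sqrt E) + Real.sqrt E * Real.cos (2 * Real.sqrt E) = 0 := by
  set f : ℝ → ℝ := fun t => m * Real.sin t + t / 2 * Real.cos t with hf
  have hpi := Real.pi_pos
  have hanti := f_strictAnti m hm
  -- values at endpoints
  have hfa : f (Real.pi / 2) = m := by
    simp [hf, Real.sin_pi_div_two, Real.cos_pi_div_two]
  have hfb : f Real.pi = -(Real.pi / 2) := by
    simp [hf, Real.sin_pi, Real.cos_pi]
  -- existence of a root t of f in [π/2, π)
  have hle : Real.pi / 2 ≤ Real.pi := by linarith
  have hIVT := intermediate_value_Icc' hle (Continuous.continuousOn (by continuity) :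
      ContinuousOn f (Set.Icc (Real.pi / 2) Real.pi))
  have h0mem : (0 : ℝ) ∈ Set.Icc (f Real.pi) (f (Real.pi / 2)) := by
    rw [hfa, hfb]; constructor <;> linarith
  obtain ⟨t, htmem, htzero⟩ := hIVT h0mem
  have htlt : t < Real.pi := by
    rcases lt_or_eq_of_le htmem.2 with h | h
    · exact h
    · exfalso; rw [h] at htzero; rw [hfb] at htzero; linarith
  have ht0 : 0 < t := lt_of_lt_of_le (by positivity) htmem.1
  -- correspondence between E and t = 2√E
  have key : ∀ E : ℝ, E ∈ Set.Ico (Real.pi ^ 2 / 16) (Real.pi ^ 2 / 4) →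
      (2 * Real.sqrt E ∈ Set.Icc (Real.pi / 2) Real.pi ∧
       (m * Real.sin (2 * Real.sqrt E) + Real.sqrt E * Real.cos (2 * Real.sqrt E)
         = f (2 * Real.sqrt E))) := by
    intro E ⟨hE1, hE2⟩
    have hs1 : Real.pi / 4 ≤ Real.sqrt E := by
      have : Real.sqrt (Real.pi ^ 2 / 16) ≤ Real.sqrt E := Real.sqrt_le_sqrt hE1
      have heq : Real.pi ^ 2 / 16 = (Real.pi / 4) ^ 2 := by ring
      rwa [heq, Real.sqrt_sq (by positivity)] at this
    have hs2 : Real.sqrt E < Real.pi / 2 := by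
      have : Real.sqrt E < Real.sqrt (Real.pi ^ 2 / 4) :=
        Real.sqrt_lt_sqrt (le_trans (by positivity) hE1) hE2
      have heq : Real.pi ^ 2 / 4 = (Real.pi / 2) ^ 2 := by ring
      rwa [heq, Real.sqrt_sq (by positivity)] at this
    refine ⟨⟨by linarith, by linarith⟩, ?_⟩
    simp only [hf]
    ring
  refine ⟨t ^ 2 / 4, ⟨⟨?_, ?_⟩, ?_⟩, ?_⟩
  · nlinarith [htmem.1]
  · nlinarith
  · have hsq : Real.sqrt (t ^ 2 / 4) = t / 2 := by
      have : t ^ 2 / 4 = (t / 2) ^ 2 := by ring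
      rw [this, Real.sqrt_sq (by linarith)]
    rw [hsq]
    have : 2 * (t / 2) = t := by ring
    rw [this]
    simpa [hf] using htzero
  · rintro y ⟨hymem, hyeq⟩
    obtain ⟨hy1, hy2⟩ := key y hymem
    have hyE1 : Real.pi ^ 2 / 16 ≤ t ^ 2 / 4 := by nlinarith [htmem.1]
    have hyE2 : t ^ 2 / 4 < Real.pi ^ 2 / 4 := by nlinarith
    have hsq : Real.sqrt (t ^ 2 / 4) = t / 2 := by
      have : t ^ 2 / 4 = (t / 2) ^ 2 := by ring
      rw [this, Real.sqrt_sq (by linarith)]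
    have hfy : f (2 * Real.sqrt y) = 0 := by rw [← hy2]; exact hyeq
    have heqs : 2 * Real.sqrt y = t := by
      apply hanti.injOn hy1 ⟨htmem.1, le_of_lt htlt⟩
      exact hfy.trans htzero.symm
    have : Real.sqrt y = Real.sqrt (t ^ 2 / 4) := by
      rw [hsq]; linarith
    have hy0 : 0 ≤ y := le_trans (by positivity) hymem.1
    have htE0 : (0:ℝ) ≤ t ^ 2 / 4 := by positivity
    nlinarith [Real.sq_sqrt hy0, Real.sq_sqrt htE0, this]
end

section
/- Let G be a Hilbert space and U a unitary operator on G. Define Λ = {((1+U)g, i(1−U)g) : g ∈ G} ⊆ G ⊕ G and Π = {(g₁, g₂) ∈ G ⊕ G : i(1−U)g₁ = (1+U)g₂}. Then Λ is a closed subspace of G ⊕ G and Λ = Π. -/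
open Complex

section CayleyPairs

variable {E : Type*} [AddCommGroup E] [Module ℂ E]

theorem smul_sub_apply_eq_add_apply_of_eq_pair (T : E →ₗ[ℂ] E) (g : E) :
    I • ((g + T g) - T (g + T g)) = I • (g - T g) + T (I • (g - T g)) := by
  simp only [map_add, map_sub, map_smul]
  module

/-- The preimage of `p` is `g = (p.1 - i p.2) / 2`, read off from
`p.1 = g + T g` and `-i p.2 = g - T g`. -/
theorem eq_pair_of_smul_sub_apply_eq_add_apply (T : E →ₗ[ℂ] E) {x y : E}
    (h : I • (x - T x) = y + T y) :
    ((2 : ℂ)⁻¹ • (x - I • y) + T ((2 : ℂ)⁻¹ • (x - I • y)),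
      I • ((2 : ℂ)⁻¹ • (x - I • y) - T ((2 : ℂ)⁻¹ • (x - I • y)))) = (x, y) := by
  have hTy : T y = I • x - I • T x - y := by
    rw [smul_sub] at h
    exact eq_sub_of_add_eq' h.symm
  simp only [map_smul, map_sub, hTy, Prod.mk.injEq]
  constructor <;> match_scalars <;> simp [Complex.ext_iff] <;> ring

theorem range_pair_eq_setOf_smul_sub_apply_eq_add_apply (T : E →ₗ[ℂ] E) :
    Set.range (fun g : E => (g + T g, I • (g - T g))) =
      {p : E × E | I • (p.1 - T p.1) = p.2 + T p.2} := by
  ext ⟨x, y⟩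
  constructor
  · rintro ⟨g, hg⟩
    rw [← hg]
    exact smul_sub_apply_eq_add_apply_of_eq_pair T g
  · intro h
    exact ⟨_, eq_pair_of_smul_sub_apply_eq_add_apply T h⟩

theorem isClosed_setOf_smul_sub_apply_eq_add_apply [TopologicalSpace E] [T2Space E]
    [IsTopologicalAddGroup E] [ContinuousConstSMul ℂ E] (T : E →L[ℂ] E) :
    IsClosed {p : E × E | I • (p.1 - T p.1) = p.2 + T p.2} :=
  isClosed_eq (by fun_prop) (by fun_prop)

end CayleyPairs

theorem lambda_closed_and_eq_pi_general {G : Type*} [NormedAddCommGroup G]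
    [InnerProductSpace ℂ G] (U : G ≃ₗᵢ[ℂ] G) :
    IsClosed (Set.range (fun g : G => ((g + U g, Complex.I • (g - U g)) : G × G))) ∧
    Set.range (fun g : G => ((g + U g, Complex.I • (g - U g)) : G × G)) =
      {p : G × G | Complex.I • (p.1 - U p.1) = p.2 + U p.2} := by
  have hrange : Set.range (fun g : G => ((g + U g, Complex.I • (g - U g)) : G × G)) =
      {p : G × G | Complex.I • (p.1 - U p.1) = p.2 + U p.2} :=
    range_pair_eq_setOf_smul_sub_apply_eq_add_apply U.toLinearEquiv.toLinearMap
  refine ⟨?_, hrange⟩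
  rw [hrange]
  exact isClosed_setOf_smul_sub_apply_eq_add_apply U.toContinuousLinearEquiv.toContinuousLinearMap

/-- For a unitary U on a Hilbert space G, the graph-type subspace
Λ = {((1+U)g, i(1−U)g)} is closed and equals Π = {(g₁,g₂) : i(1−U)g₁ = (1+U)g₂}. -/
theorem lambda_closed_and_eq_pi {G : Type*} [NormedAddCommGroup G]
    [InnerProductSpace ℂ G] [CompleteSpace G] (U : G ≃ₗᵢ[ℂ] G) :
    IsClosed (Set.range (fun g : G => ((g + U g, Complex.I • (g - U g)) : G × G))) ∧
    Set.range (fun g : G => ((g + U g, Complex.I • (g - U g)) : G × G)) =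
      {p : G × G | Complex.I • (p.1 - U p.1) = p.2 + U p.2} :=
  lambda_closed_and_eq_pi_general U
end

section
/- Let G be a Hilbert space, U unitary on G, and (f₁, f₂) ∈ G ⊕ G such that: (a) ⟨f₁, (1+U)g⟩ + ⟨f₂, i(1−U)g⟩ = 0 for all g ∈ G, and (b) i(1−U)f₁ = (1+U)f₂. Then f₁ = f₂ = 0. -/
/-- If (f₁,f₂) is orthogonal to Λ = {((1+U)g, i(1−U)g) : g ∈ G} and lies in
Π = {(g₁,g₂) : i(1−U)g₁ = (1+U)g₂}, then f₁ = f₂ = 0. -/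
theorem lambda_perp_inter_pi_trivial {G : Type*} [NormedAddCommGroup G]
    [InnerProductSpace ℂ G] [CompleteSpace G] (U : G ≃ₗᵢ[ℂ] G) (f₁ f₂ : G)
    (ha : ∀ g : G, (inner ℂ f₁ (g + U g) : ℂ) + inner ℂ f₂ (Complex.I • (g - U g)) = 0)
    (hb : Complex.I • (f₁ - U f₁) = f₂ + U f₂) :
    f₁ = 0 ∧ f₂ = 0 := by
  -- step 1: condition (a) means the vector v is orthogonal to everything
  set v : G := f₁ + U.symm f₁ + (-Complex.I) • (f₂ - U.symm f₂) with hv_def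
  have hv : ∀ g : G, (inner ℂ v g : ℂ) = 0 := by
    intro g
    have h1 : (inner ℂ (U.symm f₁) g : ℂ) = inner ℂ f₁ (U g) := by
      rw [← U.inner_map_map (U.symm f₁) g, U.apply_symm_apply]
    have h2 : (inner ℂ (U.symm f₂) g : ℂ) = inner ℂ f₂ (U g) := by
      rw [← U.inner_map_map (U.symm f₂) g, U.apply_symm_apply]
    have hag := ha g
    simp only [hv_def, inner_add_left, inner_sub_left, inner_smul_left,
      inner_add_right, inner_sub_right, inner_smul_right, map_neg,
      Complex.conj_I, h1, h2] at *
    linear_combination hag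
  have hv0 : v = 0 := by
    have := hv v
    rwa [inner_self_eq_zero] at this
  -- e1 : v = 0 rearranged
  have e1 : f₁ + U.symm f₁ + (-Complex.I) • (f₂ - U.symm f₂) = 0 := hv0
  -- e2 : apply U to e1
  have e2 : U f₁ + f₁ + (-Complex.I) • (U f₂ - f₂) = 0 := by
    have := congrArg U e1
    simpa [map_add, map_smul, map_sub] using this
  -- e4 : apply U.symm to hb
  have e4 : Complex.I • (U.symm f₁ - f₁) = U.symm f₂ + f₂ := by
    have := congrArg U.symm hb
    simpa [map_add, map_smul, map_sub] using this
  -- multiply hb and e4 by I to kill the I • I • nesting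
  have e3' : U f₁ - f₁ = Complex.I • (f₂ + U f₂) := by
    have := congrArg (Complex.I • ·) hb
    simpa [smul_smul, Complex.I_mul_I, neg_smul, neg_sub] using this
  have e4' : f₁ - U.symm f₁ = Complex.I • (U.symm f₂ + f₂) := by
    have := congrArg (Complex.I • ·) e4
    simpa [smul_smul, Complex.I_mul_I, neg_smul, neg_sub] using this
  have h4 : (4 : ℂ) • f₁ = 0 := by
    linear_combination (norm := module) e1 + e2 - e3' + e4'
  have hf1 : f₁ = 0 := by
    have := smul_eq_zero.mp h4
    simpa using this
  subst hf1
  refine ⟨rfl, ?_⟩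
  -- from e2 with f₁ = 0 : U f₂ = f₂ ; from hb : f₂ + U f₂ = 0
  have hUf : U f₂ = f₂ := by
    have h := e2
    simp only [map_zero, add_zero, zero_add] at h
    have h' : U f₂ - f₂ = 0 := by
      have := smul_eq_zero.mp h
      simpa using this
    exact sub_eq_zero.mp h'
  have hb' : f₂ + U f₂ = 0 := by simpa using hb.symm
  rw [hUf] at hb'
  have h2 : (2 : ℂ) • f₂ = 0 := by rw [two_smul]; exact hb'
  have := smul_eq_zero.mp h2
  simpa using this
end
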